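/- arXiv:2307.00199 — 3 statements merged into one kernel-verified Lean document; each statement's English description precedes it below -/
import Mathlib

section
/- The matrix pencil for the first-order system A(U)∂₁U + B(U)∂₂U = C(U), with A(U) = [[1,0,1/(ρu₁)],[0,1,0],[1/(ρu₁),0,1/(ρ²c²)]] and B(U) = [[0,0,−u₂/u₁],[0,0,1],[−u₂/u₁,1,0]], has generalized eigenvalues (roots λ of det(B − λA) = 0) given exactly by λ₀ = 0 and λ_{1,2} = (ρ u₁ c²/(u₁² − c²)) · ( u₂/u₁ ∓ √(u₁² + u₂² − c²)/c ), provided u₁ > 0, ρ > 0, u₁² ≠ c², and u₁² + u₂² > c². -/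
/-!
Expanding along the first row, `det (B - λA) = λ · q(λ)`, and clearing denominators in `q`
gives the quadratic `(c² - u₁²) λ² + 2 c² ρ u₂ λ + c² ρ² (u₁² + u₂²)`, whose discriminant is
`(2 c ρ u₁)² (u₁² + u₂² - c²)`. Since `u₁² + u₂² > c²` its square root is real, and the
quadratic formula yields `λ_{1,2}`.
-/

section RotatingEulerPencil

variable (ρ c u₁ u₂ : ℝ)

theorem det_pencil_eq (lam : ℝ) :
    Matrix.det
        (!![(0 : ℝ), 0, -u₂ / u₁; 0, 0, 1; -u₂ / u₁, 1, 0]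
          - lam • !![(1 : ℝ), 0, 1 / (ρ * u₁); 0, 1, 0;
              1 / (ρ * u₁), 0, 1 / (ρ ^ 2 * c ^ 2)]) =
      lam * ((u₂ / u₁ + lam / (ρ * u₁)) ^ 2 + 1 - lam ^ 2 / (ρ ^ 2 * c ^ 2)) := by
  simp only [Matrix.det_fin_three, Matrix.sub_apply, Matrix.smul_apply, Matrix.of_apply,
    Matrix.cons_val', Matrix.cons_val_zero, Matrix.cons_val_one, Matrix.cons_val_two,
    Matrix.head_cons, Matrix.tail_cons, Matrix.empty_val', Matrix.cons_val_fin_one,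
    Matrix.head_fin_const, smul_eq_mul]
  ring

variable {ρ c u₁}

theorem pencil_quadratic_factor_eq_zero_iff (hρ : ρ ≠ 0) (hc : c ≠ 0) (hu₁ : u₁ ≠ 0)
    (lam : ℝ) :
    (u₂ / u₁ + lam / (ρ * u₁)) ^ 2 + 1 - lam ^ 2 / (ρ ^ 2 * c ^ 2) = 0 ↔
      (c ^ 2 - u₁ ^ 2) * (lam * lam) + 2 * c ^ 2 * ρ * u₂ * lam
        + c ^ 2 * ρ ^ 2 * (u₁ ^ 2 + u₂ ^ 2) = 0 := by
  have hclear :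
      (ρ * c * u₁) ^ 2 * ((u₂ / u₁ + lam / (ρ * u₁)) ^ 2 + 1 - lam ^ 2 / (ρ ^ 2 * c ^ 2)) =
        (c ^ 2 - u₁ ^ 2) * (lam * lam) + 2 * c ^ 2 * ρ * u₂ * lam
          + c ^ 2 * ρ ^ 2 * (u₁ ^ 2 + u₂ ^ 2) := by
    field_simp
    ring
  rw [← hclear, mul_eq_zero_iff_left (by positivity)]

theorem discrim_pencil_quadratic {s : ℝ} (hs : s ^ 2 = u₁ ^ 2 + u₂ ^ 2 - c ^ 2) :
    discrim (c ^ 2 - u₁ ^ 2) (2 * c ^ 2 * ρ * u₂) (c ^ 2 * ρ ^ 2 * (u₁ ^ 2 + u₂ ^ 2)) =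
      (2 * c * ρ * u₁ * s) * (2 * c * ρ * u₁ * s) := by
  rw [discrim]
  linear_combination (-4 * c ^ 2 * ρ ^ 2 * u₁ ^ 2) * hs

end RotatingEulerPencil

/-- The generalized eigenvalues of the pencil det(B − λA) = 0 for the Lagrangian
rotating Euler system are exactly λ₀ = 0 and
λ_{1,2} = (ρu₁c²/(u₁²−c²))(u₂/u₁ ∓ √(u₁²+u₂²−c²)/c). -/
theorem generalized_eigenvalues_pencil
    (ρ c u₁ u₂ : ℝ) (hρ : 0 < ρ) (hc : 0 < c) (hu₁ : 0 < u₁)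
    (hne : u₁ ^ 2 ≠ c ^ 2) (hsup : c ^ 2 < u₁ ^ 2 + u₂ ^ 2) :
    ∀ lam : ℝ,
      Matrix.det
        (!![(0 : ℝ), 0, -u₂ / u₁; 0, 0, 1; -u₂ / u₁, 1, 0]
          - lam • !![(1 : ℝ), 0, 1 / (ρ * u₁); 0, 1, 0;
              1 / (ρ * u₁), 0, 1 / (ρ ^ 2 * c ^ 2)]) = 0 ↔
      (lam = 0 ∨
        lam = ρ * u₁ * c ^ 2 / (u₁ ^ 2 - c ^ 2)
          * (u₂ / u₁ - Real.sqrt (u₁ ^ 2 + u₂ ^ 2 - c ^ 2) / c) ∨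
        lam = ρ * u₁ * c ^ 2 / (u₁ ^ 2 - c ^ 2)
          * (u₂ / u₁ + Real.sqrt (u₁ ^ 2 + u₂ ^ 2 - c ^ 2) / c)) := by
  intro lam
  set s := Real.sqrt (u₁ ^ 2 + u₂ ^ 2 - c ^ 2)
  have hs : s ^ 2 = u₁ ^ 2 + u₂ ^ 2 - c ^ 2 := Real.sq_sqrt (by linarith)
  have ha : c ^ 2 - u₁ ^ 2 ≠ 0 := sub_ne_zero.mpr hne.symm
  have ha' : u₁ ^ 2 - c ^ 2 ≠ 0 := sub_ne_zero.mpr hne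
  have hroot_minus : (-(2 * c ^ 2 * ρ * u₂) + 2 * c * ρ * u₁ * s) / (2 * (c ^ 2 - u₁ ^ 2)) =
      ρ * u₁ * c ^ 2 / (u₁ ^ 2 - c ^ 2) * (u₂ / u₁ - s / c) := by
    field_simp
    ring
  have hroot_plus : (-(2 * c ^ 2 * ρ * u₂) - 2 * c * ρ * u₁ * s) / (2 * (c ^ 2 - u₁ ^ 2)) =
      ρ * u₁ * c ^ 2 / (u₁ ^ 2 - c ^ 2) * (u₂ / u₁ + s / c) := by
    field_simp
    ring
  rw [det_pencil_eq, mul_eq_zero,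
    pencil_quadratic_factor_eq_zero_iff u₂ hρ.ne' hc.ne' hu₁.ne',
    quadratic_eq_zero_iff ha (discrim_pencil_quadratic u₂ hs), hroot_minus, hroot_plus]
end

section
/- For supersonic states (u₁² + u₂² > c², u₁ > c > 0, ρ > 0), the vectors r₁ = (−λ₁/(ρu₁) − u₂/u₁, 1, λ₁)ᵀ and r₂ = (−λ₂/(ρu₁) − u₂/u₁, 1, λ₂)ᵀ satisfy (B − λᵢ A) rᵢ = 0 for i = 1, 2, where λ_{1,2} = (ρu₁c²/(u₁²−c²))(u₂/u₁ ∓ √(u₁²+u₂²−c²)/c), and A, B are the coefficient matrices of the Lagrangian rotating Euler system. -/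
/-!
Only the last row of `(B - λ A) r(λ)` is not identically zero; cleared of denominators it is
minus the characteristic quadratic `(u₁² - c²) λ² - 2 ρ c² u₂ λ - ρ² c² (u₁² + u₂²)` of the
pencil. Its discriminant is `4 ρ² c² u₁² (u₁² + u₂² - c²)`, and `λ₁`, `λ₂` are its two roots.
-/

open Matrix

noncomputable section

def rotatingEulerA (ρ c u₁ : ℝ) : Matrix (Fin 3) (Fin 3) ℝ :=
  !![(1 : ℝ), 0, 1 / (ρ * u₁); 0, 1, 0; 1 / (ρ * u₁), 0, 1 / (ρ ^ 2 * c ^ 2)]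

def rotatingEulerB (u₁ u₂ : ℝ) : Matrix (Fin 3) (Fin 3) ℝ :=
  !![(0 : ℝ), 0, -u₂ / u₁; 0, 0, 1; -u₂ / u₁, 1, 0]

def pencilCharQuadratic (ρ c u₁ u₂ lam : ℝ) : ℝ :=
  (u₁ ^ 2 - c ^ 2) * lam ^ 2 - 2 * ρ * c ^ 2 * u₂ * lam - ρ ^ 2 * c ^ 2 * (u₁ ^ 2 + u₂ ^ 2)

def pencilEigenvector (ρ u₁ u₂ lam : ℝ) : Fin 3 → ℝ :=
  ![-lam / (ρ * u₁) - u₂ / u₁, 1, lam]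

theorem pencil_mulVec_eigenvector_eq_zero {ρ c u₁ u₂ lam : ℝ}
    (hρ : ρ ≠ 0) (hc : c ≠ 0) (hu₁ : u₁ ≠ 0)
    (hroot : pencilCharQuadratic ρ c u₁ u₂ lam = 0) :
    (rotatingEulerB u₁ u₂ - lam • rotatingEulerA ρ c u₁) *ᵥ pencilEigenvector ρ u₁ u₂ lam = 0 := by
  rw [pencilCharQuadratic] at hroot
  rw [sub_mulVec, smul_mulVec, sub_eq_zero]
  simp only [rotatingEulerA, rotatingEulerB, pencilEigenvector, cons_mulVec, empty_mulVec,
    vec3_dotProduct', smul_cons, smul_empty, smul_eq_mul]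
  refine vec3_eq ?_ ?_ ?_
  · ring
  · ring
  · field_simp
    linear_combination -hroot

theorem pencilCharQuadratic_eq_zero (ρ u₂ s : ℝ) {c u₁ : ℝ} (hc : c ≠ 0) (hu₁ : u₁ ≠ 0)
    (hd : u₁ ^ 2 - c ^ 2 ≠ 0) (hs : s ^ 2 = u₁ ^ 2 + u₂ ^ 2 - c ^ 2) :
    pencilCharQuadratic ρ c u₁ u₂ (ρ * u₁ * c ^ 2 / (u₁ ^ 2 - c ^ 2) * (u₂ / u₁ + s / c)) = 0 := by
  unfold pencilCharQuadratic
  field_simp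
  linear_combination c ^ 2 * ρ ^ 2 * u₁ ^ 2 * hs

end

theorem right_eigenvectors_pencil_general
    (ρ c u₁ u₂ : ℝ) (hρ : 0 < ρ) (hc : 0 < c) (hu₁ : c < u₁) :
    let A : Matrix (Fin 3) (Fin 3) ℝ :=
      !![(1 : ℝ), 0, 1 / (ρ * u₁); 0, 1, 0; 1 / (ρ * u₁), 0, 1 / (ρ ^ 2 * c ^ 2)]
    let B : Matrix (Fin 3) (Fin 3) ℝ :=
      !![(0 : ℝ), 0, -u₂ / u₁; 0, 0, 1; -u₂ / u₁, 1, 0]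
    let lam₁ : ℝ := ρ * u₁ * c ^ 2 / (u₁ ^ 2 - c ^ 2)
      * (u₂ / u₁ - Real.sqrt (u₁ ^ 2 + u₂ ^ 2 - c ^ 2) / c)
    let lam₂ : ℝ := ρ * u₁ * c ^ 2 / (u₁ ^ 2 - c ^ 2)
      * (u₂ / u₁ + Real.sqrt (u₁ ^ 2 + u₂ ^ 2 - c ^ 2) / c)
    (B - lam₁ • A).mulVec ![-lam₁ / (ρ * u₁) - u₂ / u₁, 1, lam₁] = 0 ∧
    (B - lam₂ • A).mulVec ![-lam₂ / (ρ * u₁) - u₂ / u₁, 1, lam₂] = 0 := by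
  intro A B lam₁ lam₂
  have hu₁₀ : u₁ ≠ 0 := (hc.trans hu₁).ne'
  have hsq : c ^ 2 < u₁ ^ 2 := pow_lt_pow_left₀ hu₁ hc.le two_ne_zero
  have hd : u₁ ^ 2 - c ^ 2 ≠ 0 := (sub_pos.2 hsq).ne'
  have hs : √(u₁ ^ 2 + u₂ ^ 2 - c ^ 2) ^ 2 = u₁ ^ 2 + u₂ ^ 2 - c ^ 2 :=
    Real.sq_sqrt (by linarith [sq_nonneg u₂])
  have hlam₁ := pencilCharQuadratic_eq_zero ρ u₂ (-√(u₁ ^ 2 + u₂ ^ 2 - c ^ 2)) hc.ne' hu₁₀ hd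
    (by rwa [neg_sq])
  rw [neg_div, ← sub_eq_add_neg] at hlam₁
  exact ⟨pencil_mulVec_eigenvector_eq_zero hρ.ne' hc.ne' hu₁₀ hlam₁,
    pencil_mulVec_eigenvector_eq_zero hρ.ne' hc.ne' hu₁₀
      (pencilCharQuadratic_eq_zero ρ u₂ _ hc.ne' hu₁₀ hd hs)⟩

/-- For supersonic states, the vectors rᵢ = (−λᵢ/(ρu₁) − u₂/u₁, 1, λᵢ)ᵀ are right
eigenvectors of the pencil: (B − λᵢA) rᵢ = 0, i = 1,2, where
λ_{1,2} = (ρu₁c²/(u₁²−c²))(u₂/u₁ ∓ √(u₁²+u₂²−c²)/c). -/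
theorem right_eigenvectors_pencil
    (ρ c u₁ u₂ : ℝ) (hρ : 0 < ρ) (hc : 0 < c) (hu₁ : c < u₁)
    (hsup : c ^ 2 < u₁ ^ 2 + u₂ ^ 2) :
    let A : Matrix (Fin 3) (Fin 3) ℝ :=
      !![(1 : ℝ), 0, 1 / (ρ * u₁); 0, 1, 0; 1 / (ρ * u₁), 0, 1 / (ρ ^ 2 * c ^ 2)]
    let B : Matrix (Fin 3) (Fin 3) ℝ :=
      !![(0 : ℝ), 0, -u₂ / u₁; 0, 0, 1; -u₂ / u₁, 1, 0]
    let lam₁ : ℝ := ρ * u₁ * c ^ 2 / (u₁ ^ 2 - c ^ 2)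
      * (u₂ / u₁ - Real.sqrt (u₁ ^ 2 + u₂ ^ 2 - c ^ 2) / c)
    let lam₂ : ℝ := ρ * u₁ * c ^ 2 / (u₁ ^ 2 - c ^ 2)
      * (u₂ / u₁ + Real.sqrt (u₁ ^ 2 + u₂ ^ 2 - c ^ 2) / c)
    (B - lam₁ • A).mulVec ![-lam₁ / (ρ * u₁) - u₂ / u₁, 1, lam₁] = 0 ∧
    (B - lam₂ • A).mulVec ![-lam₂ / (ρ * u₁) - u₂ / u₁, 1, lam₂] = 0 :=
  right_eigenvectors_pencil_general ρ c u₁ u₂ hρ hc hu₁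
end

section
/- Riemann-invariant diagonalization: Let W = u₂/u₁ and let Z₁ = arctan W − Λ(P), Z₂ = arctan W + Λ(P) with Λ'(P) = √(u₁²+u₂²−c²)/(ρ c u₁² (1+W²)) expressed through the Bernoulli relation. If (W, P) solves the 2×2 system ∂₁G + M ∂₂G = N with M = [[ρc²u₂/(u₁²−c²), (u₁²+u₂²−c²)/(u₁(u₁²−c²))],[ρ²c²u₁³/(u₁²−c²), ρc²u₂/(u₁²−c²)]], then Z₁ and Z₂ satisfy the decoupled transport relations (∂₁ + λᵢ ∂₂)Zᵢ = Kᵢ, i = 1,2, where λ_{1,2} are the two eigenvalues of M and K_{1,2} = −u₁(u₁²+u₂²−c²)/((u₁²+u₂²)(u₁²−c²)) ± c u₂ √(u₁²+u₂²−c²)/((u₁²+u₂²)(u₁²−c²)). -/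
/-- partial derivative in the first variable -/
noncomputable def pd1 (f : ℝ × ℝ → ℝ) (z : ℝ × ℝ) : ℝ := fderiv ℝ f z (1, 0)

/-- partial derivative in the second variable -/
noncomputable def pd2 (f : ℝ × ℝ → ℝ) (z : ℝ × ℝ) : ℝ := fderiv ℝ f z (0, 1)

set_option maxHeartbeats 2000000

lemma key_alg (u v r c s a b p q ε : ℝ) (hu : u ≠ 0) (hc : c ≠ 0) (hr : r ≠ 0)
    (huc : u^2 - c^2 ≠ 0) (huv : u^2 + v^2 ≠ 0)
    (hε : ε = 1 ∨ ε = -1)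
    (eq1 : a + (r*c^2*v/(u^2-c^2))*b + (s^2/(u*(u^2-c^2)))*q
      = -(s^2/(u*(u^2-c^2))))
    (eq2 : p + (r^2*c^2*u^3/(u^2-c^2))*b + (r*c^2*v/(u^2-c^2))*q
      = -(r*c^2*v/(u^2-c^2))) :
    (1/(1+(v/u)^2) * a + ε * (s/(r*c*u^2*(1+(v/u)^2))) * p)
    + (r*u*c^2/(u^2-c^2) * (v/u + ε * (s/c)))
      * (1/(1+(v/u)^2) * b + ε * (s/(r*c*u^2*(1+(v/u)^2))) * q)
    = -(u*s^2)/((u^2+v^2)*(u^2-c^2)) - ε * (c*v*s/((u^2+v^2)*(u^2-c^2))) := by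
  have ha : a = -(s^2/(u*(u^2-c^2))) - (r*c^2*v/(u^2-c^2))*b - (s^2/(u*(u^2-c^2)))*q := by
    linarith
  have hp : p = -(r*c^2*v/(u^2-c^2)) - (r^2*c^2*u^3/(u^2-c^2))*b - (r*c^2*v/(u^2-c^2))*q := by
    linarith
  subst ha hp
  rcases hε with h | h <;> subst h <;> field_simp <;> ring

/-- Riemann-invariant diagonalization: if (W,P) solves the 2×2 system
∂₁G + M∂₂G = N of the supersonic rotating Euler flow in Lagrangian coordinates,
then Z₁ = arctan W − Λ(P) and Z₂ = arctan W + Λ(P) satisfy the decoupled transport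
relations (∂₁ + λᵢ∂₂)Zᵢ = Kᵢ, with λᵢ the eigenvalues of M and Kᵢ the stated
Coriolis source terms. -/
theorem riemann_invariant_diagonalization
    (u₁ u₂ ρ c W P : ℝ × ℝ → ℝ) (Λ : ℝ → ℝ)
    (hρ : ∀ z, 0 < ρ z) (hc : ∀ z, 0 < c z)
    (hsup1 : ∀ z, c z < u₁ z) (hsup2 : ∀ z, c z ^ 2 < u₁ z ^ 2 + u₂ z ^ 2)
    (hWdiff : Differentiable ℝ W) (hPdiff : Differentiable ℝ P)
    (hΛdiff : Differentiable ℝ Λ)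
    (hW : ∀ z, W z = u₂ z / u₁ z)
    (hΛ' : ∀ z, HasDerivAt Λ
      (Real.sqrt (u₁ z ^ 2 + u₂ z ^ 2 - c z ^ 2)
        / (ρ z * c z * u₁ z ^ 2 * (1 + W z ^ 2))) (P z))
    -- the 2×2 system ∂₁G + M ∂₂G = N for G = (W,P)ᵀ
    (hsys1 : ∀ z, pd1 W z
      + (ρ z * c z ^ 2 * u₂ z / (u₁ z ^ 2 - c z ^ 2)) * pd2 W z
      + ((u₁ z ^ 2 + u₂ z ^ 2 - c z ^ 2) / (u₁ z * (u₁ z ^ 2 - c z ^ 2))) * pd2 P z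
      = -((u₁ z ^ 2 + u₂ z ^ 2 - c z ^ 2) / (u₁ z * (u₁ z ^ 2 - c z ^ 2))))
    (hsys2 : ∀ z, pd1 P z
      + (ρ z ^ 2 * c z ^ 2 * u₁ z ^ 3 / (u₁ z ^ 2 - c z ^ 2)) * pd2 W z
      + (ρ z * c z ^ 2 * u₂ z / (u₁ z ^ 2 - c z ^ 2)) * pd2 P z
      = -(ρ z * c z ^ 2 * u₂ z / (u₁ z ^ 2 - c z ^ 2))) :
    ∀ z : ℝ × ℝ,
      (pd1 (fun w => Real.arctan (W w) - Λ (P w)) z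
        + (ρ z * u₁ z * c z ^ 2 / (u₁ z ^ 2 - c z ^ 2)
            * (u₂ z / u₁ z - Real.sqrt (u₁ z ^ 2 + u₂ z ^ 2 - c z ^ 2) / c z))
          * pd2 (fun w => Real.arctan (W w) - Λ (P w)) z
        = -(u₁ z * (u₁ z ^ 2 + u₂ z ^ 2 - c z ^ 2))
            / ((u₁ z ^ 2 + u₂ z ^ 2) * (u₁ z ^ 2 - c z ^ 2))
          + c z * u₂ z * Real.sqrt (u₁ z ^ 2 + u₂ z ^ 2 - c z ^ 2)
            / ((u₁ z ^ 2 + u₂ z ^ 2) * (u₁ z ^ 2 - c z ^ 2))) ∧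
      (pd1 (fun w => Real.arctan (W w) + Λ (P w)) z
        + (ρ z * u₁ z * c z ^ 2 / (u₁ z ^ 2 - c z ^ 2)
            * (u₂ z / u₁ z + Real.sqrt (u₁ z ^ 2 + u₂ z ^ 2 - c z ^ 2) / c z))
          * pd2 (fun w => Real.arctan (W w) + Λ (P w)) z
        = -(u₁ z * (u₁ z ^ 2 + u₂ z ^ 2 - c z ^ 2))
            / ((u₁ z ^ 2 + u₂ z ^ 2) * (u₁ z ^ 2 - c z ^ 2))
          - c z * u₂ z * Real.sqrt (u₁ z ^ 2 + u₂ z ^ 2 - c z ^ 2)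
            / ((u₁ z ^ 2 + u₂ z ^ 2) * (u₁ z ^ 2 - c z ^ 2))) := by
  intro z
  set u := u₁ z with hu_def
  set v := u₂ z with hv_def
  set r := ρ z with hr_def
  set cz := c z with hcz_def
  have hc0 : (0:ℝ) < cz := hc z
  have hu0 : (0:ℝ) < u := lt_trans hc0 (hsup1 z)
  have hune : u ≠ 0 := ne_of_gt hu0
  have hcne : cz ≠ 0 := ne_of_gt hc0
  have hrne : r ≠ 0 := ne_of_gt (hρ z)
  have hucpos : (0:ℝ) < u^2 - cz^2 := by nlinarith [hsup1 z, hc0]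
  have hucne : u^2 - cz^2 ≠ 0 := ne_of_gt hucpos
  have huvne : u^2 + v^2 ≠ 0 := by positivity
  set X := u^2 + v^2 - cz^2 with hX_def
  have hXpos : (0:ℝ) < X := by have := hsup2 z; simp only [hX_def]; linarith
  set s := Real.sqrt X with hs_def
  have hs2 : s^2 = X := Real.sq_sqrt (le_of_lt hXpos)
  -- derivative of Λ value
  have hΛval : Real.sqrt (u ^ 2 + v ^ 2 - cz ^ 2) / (r * cz * u ^ 2 * (1 + W z ^ 2))
      = s/(r*cz*u^2*(1+(v/u)^2)) := by rw [hW z, ← hs_def]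
  set a := pd1 W z with ha_def
  set b := pd2 W z with hb_def
  set p := pd1 P z with hp_def
  set q := pd2 P z with hq_def
  have eq1 : a + (r*cz^2*v/(u^2-cz^2))*b + (s^2/(u*(u^2-cz^2)))*q
      = -(s^2/(u*(u^2-cz^2))) := by
    have := hsys1 z
    rw [hs2]
    convert this using 2 <;> ring
  have eq2 : p + (r^2*cz^2*u^3/(u^2-cz^2))*b + (r*cz^2*v/(u^2-cz^2))*q
      = -(r*cz^2*v/(u^2-cz^2)) := by
    have := hsys2 z
    convert this using 2 <;> ring
  -- derivative computations
  have harc : HasFDerivAt (fun w => Real.arctan (W w))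
      ((1 / (1 + W z ^ 2)) • fderiv ℝ W z) z :=
    (Real.hasDerivAt_arctan (W z)).comp_hasFDerivAt z (hWdiff z).hasFDerivAt
  have hlam : HasFDerivAt (fun w => Λ (P w))
      ((Real.sqrt (u ^ 2 + v ^ 2 - cz ^ 2) / (r * cz * u ^ 2 * (1 + W z ^ 2)))
        • fderiv ℝ P z) z :=
    (hΛ' z).comp_hasFDerivAt z (hPdiff z).hasFDerivAt
  set L : ℝ := s/(r*cz*u^2*(1+(v/u)^2)) with hL_def
  have hWz2 : (1:ℝ) + W z ^ 2 = 1 + (v/u)^2 := by rw [hW z]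
  have hsub : HasFDerivAt (fun w => Real.arctan (W w) - Λ (P w))
      ((1 / (1 + (v/u) ^ 2)) • fderiv ℝ W z - L • fderiv ℝ P z) z := by
    rw [← hWz2, ← hΛval]
    exact harc.sub hlam
  have hadd : HasFDerivAt (fun w => Real.arctan (W w) + Λ (P w))
      ((1 / (1 + (v/u) ^ 2)) • fderiv ℝ W z + L • fderiv ℝ P z) z := by
    rw [← hWz2, ← hΛval]
    exact harc.add hlam
  have e1 : pd1 (fun w => Real.arctan (W w) - Λ (P w)) z
      = 1/(1+(v/u)^2) * a - L * p := by
    simp only [pd1, hsub.fderiv, ContinuousLinearMap.sub_apply,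
      ContinuousLinearMap.smul_apply, smul_eq_mul, ha_def, hp_def]
  have e2 : pd2 (fun w => Real.arctan (W w) - Λ (P w)) z
      = 1/(1+(v/u)^2) * b - L * q := by
    simp only [pd2, hsub.fderiv, ContinuousLinearMap.sub_apply,
      ContinuousLinearMap.smul_apply, smul_eq_mul, hb_def, hq_def]
  have e3 : pd1 (fun w => Real.arctan (W w) + Λ (P w)) z
      = 1/(1+(v/u)^2) * a + L * p := by
    simp only [pd1, hadd.fderiv, ContinuousLinearMap.add_apply,
      ContinuousLinearMap.smul_apply, smul_eq_mul, ha_def, hp_def]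
  have e4 : pd2 (fun w => Real.arctan (W w) + Λ (P w)) z
      = 1/(1+(v/u)^2) * b + L * q := by
    simp only [pd2, hadd.fderiv, ContinuousLinearMap.add_apply,
      ContinuousLinearMap.smul_apply, smul_eq_mul, hb_def, hq_def]
  constructor
  · rw [e1, e2]
    have hk := key_alg u v r cz s a b p q (-1) hune hcne hrne hucne huvne
      (Or.inr rfl) eq1 eq2
    rw [hL_def]
    linear_combination hk - (u/((u^2+v^2)*(u^2-cz^2))) * hs2
  · rw [e3, e4]
    have hk := key_alg u v r cz s a b p q 1 hune hcne hrne hucne huvne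
      (Or.inl rfl) eq1 eq2
    rw [hL_def]
    linear_combination hk - (u/((u^2+v^2)*(u^2-cz^2))) * hs2
end
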